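/- For every real x ≥ 2, ∑_{p ≤ x} 1/p ≤ log(log x) + 3 - log(log 2), where the sum runs over primes p ≤ x. -/

import Mathlib

/-!
By Legendre's formula `log n! ≥ ∑_{p ≤ n} ⌊n/p⌋ log p`; together with `log n! ≤ n log n` and
Chebyshev's bound `θ(n) ≤ n log 4` this gives `A(n) := ∑_{p ≤ n} log p / p ≤ log n + log 4`.
Partial summation, run as an induction on `n`, then gives
`∑_{p ≤ n} 1/p ≤ (A(n) - log 4) / log n + log log n - log log 2 + 2`: a new prime `n + 1` adds
`1/(n+1)` on the left and `(log (n+1) / (n+1)) / log (n+1)` on the right, and replacing `log n`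
by `log (n+1)` in the remaining terms costs nothing because `c / a + log a ≤ c / b + log b`
whenever `c ≤ a ≤ b`. By Mertens' bound the first summand is at most `1`.
-/

open Nat hiding log
open Finset Real

lemma Nat.sum_primesLE_succ {M : Type*} [AddCommMonoid M] (f : ℕ → M) (n : ℕ) :
    ∑ p ∈ primesLE (n + 1), f p =
      ∑ p ∈ primesLE n, f p + if (n + 1).Prime then f (n + 1) else 0 := by
  rw [primesLE_succ]
  split_ifs
  · rw [sum_insert (notMem_primesLE n), add_comm]
  · rw [add_zero]

lemma Nat.primeFactors_factorial (n : ℕ) : (n !).primeFactors = primesLE n := by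
  ext p
  simp only [mem_primeFactors, mem_primesLE, ne_eq, factorial_ne_zero, not_false_eq_true, and_true]
  exact ⟨fun ⟨hp, hdvd⟩ ↦ ⟨hp.dvd_factorial.1 hdvd, hp⟩, fun ⟨hpn, hp⟩ ↦ ⟨hp, hp.dvd_factorial.2 hpn⟩⟩

lemma Nat.Prime.div_le_factorization_factorial {p : ℕ} (hp : p.Prime) (n : ℕ) :
    n / p ≤ (n !).factorization p := by
  rw [factorization_factorial hp (b := n + 2) (by have := Nat.log_le_self p n; omega)]
  simpa using single_le_sum (f := fun i ↦ n / p ^ i) (fun _ _ ↦ Nat.zero_le _)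
    (mem_Ico.2 ⟨le_rfl, by omega⟩ : 1 ∈ Ico 1 (n + 2))

lemma log_factorial_eq_sum_primesLE (n : ℕ) :
    log n ! = ∑ p ∈ primesLE n, (n !).factorization p * log p := by
  rw [log_nat_eq_sum_factorization, Finsupp.sum, support_factorization, primeFactors_factorial]

lemma sum_div_mul_log_le_log_factorial (n : ℕ) :
    ∑ p ∈ primesLE n, ((n / p : ℕ) : ℝ) * log p ≤ log n ! := by
  rw [log_factorial_eq_sum_primesLE]
  gcongr with p hp
  exact (prime_of_mem_primesLE hp).div_le_factorization_factorial n

lemma sum_primesLE_log_div_le (n : ℕ) : ∑ p ∈ primesLE n, log p / p ≤ log n + log 4 := by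
  rcases n.eq_zero_or_pos with rfl | hn
  · simpa using log_nonneg (by norm_num : (1 : ℝ) ≤ 4)
  have hn' : (0 : ℝ) < n := by exact_mod_cast hn
  have hdiv (p : ℕ) : (n : ℝ) / p ≤ (n / p : ℕ) + 1 := by
    rw [← floor_div_eq_div (K := ℝ)]
    exact (lt_floor_add_one _).le
  refine le_of_mul_le_mul_left ?_ hn'
  calc (n : ℝ) * ∑ p ∈ primesLE n, log p / p
      = ∑ p ∈ primesLE n, (n : ℝ) / p * log p := by rw [mul_sum]; congr! 1; ring
    _ ≤ ∑ p ∈ primesLE n, (((n / p : ℕ) : ℝ) + 1) * log p := by gcongr with p; exact hdiv p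
    _ = ∑ p ∈ primesLE n, ((n / p : ℕ) : ℝ) * log p + Chebyshev.theta n := by
      simp only [add_mul, one_mul, sum_add_distrib, Chebyshev.theta_eq_sum_primesLE_log]
    _ ≤ log n ! + log 4 * n :=
      add_le_add (sum_div_mul_log_le_log_factorial n) (Chebyshev.theta_le_log4_mul_x hn'.le)
    _ ≤ n * log n + log 4 * n := by
      gcongr
      calc log (n ! : ℝ) ≤ log ((n : ℝ) ^ n) := by gcongr; exact_mod_cast factorial_le_pow n
        _ = n * log n := Real.log_pow n n
    _ = n * (log n + log 4) := by ring

lemma div_add_log_le_div_add_log {a b c : ℝ} (ha : 0 < a) (hab : a ≤ b) (hc : c ≤ a) :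
    c / a + log a ≤ c / b + log b := by
  have hb : 0 < b := ha.trans_le hab
  have hd : 0 ≤ 1 / a - 1 / b := sub_nonneg.2 (one_div_le_one_div_of_le ha hab)
  suffices c / a - c / b ≤ log b - log a by linarith
  calc c / a - c / b = c * (1 / a - 1 / b) := by ring
    _ ≤ a * (1 / a - 1 / b) := mul_le_mul_of_nonneg_right hc hd
    _ = 1 - a / b := by field_simp
    _ ≤ -log (a / b) := by linarith [log_le_sub_one_of_pos (div_pos ha hb)]
    _ = log b - log a := by rw [log_div ha.ne' hb.ne']; ring

lemma sum_primesLE_one_div_le (n : ℕ) (hn : 2 ≤ n) :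
    ∑ p ∈ primesLE n, 1 / (p : ℝ) ≤
      (∑ p ∈ primesLE n, log p / p - log 4) / log n + log (log n) - log (log 2) + 2 := by
  induction n, hn using Nat.le_induction with
  | base =>
    have hprimes : primesLE 2 = {2} := by decide
    have hlog4 : log 4 = 2 * log 2 := by
      rw [show (4 : ℝ) = 2 ^ 2 by norm_num, Real.log_pow, cast_ofNat]
    simp only [hprimes, sum_singleton, cast_ofNat]
    field_simp
    linarith
  | succ n hn ih =>
    set w : ℝ := if (n + 1).Prime then log (n + 1 : ℕ) / (n + 1 : ℕ) else 0
    have hlog : 0 < log (n : ℝ) := log_pos (by exact_mod_cast hn)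
    have hlog_le : log (n : ℝ) ≤ log (n + 1 : ℕ) := log_le_log (by positivity) (by simp)
    have hnew : (if (n + 1).Prime then 1 / ((n + 1 : ℕ) : ℝ) else 0) = w / log (n + 1 : ℕ) := by
      simp only [w]
      split_ifs
      · rw [div_right_comm, div_self (hlog.trans_le hlog_le).ne']
      · rw [zero_div]
    have hold := div_add_log_le_div_add_log hlog hlog_le
      (by linarith [sum_primesLE_log_div_le n] : ∑ p ∈ primesLE n, log p / p - log 4 ≤ log n)
    have hsplit : (∑ p ∈ primesLE n, log p / p + w - log 4) / log (n + 1 : ℕ) =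
        (∑ p ∈ primesLE n, log p / p - log 4) / log (n + 1 : ℕ) + w / log (n + 1 : ℕ) := by ring
    rw [sum_primesLE_succ, sum_primesLE_succ, hnew]
    linarith

theorem prime_recip_sum (x : ℝ) (hx : 2 ≤ x) :
    ∑ p ∈ (Finset.range (⌊x⌋₊ + 1)).filter Nat.Prime, (1 : ℝ) / p
      ≤ Real.log (Real.log x) + 3 - Real.log (Real.log 2) := by
  rw [← primesLE_eq_filter_range]
  set N := ⌊x⌋₊
  have hN : 2 ≤ N := le_floor (by exact_mod_cast hx)
  have hlogN : 0 < log (N : ℝ) := log_pos (by exact_mod_cast hN)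
  have hmertens : (∑ p ∈ primesLE N, log p / p - log 4) / log N ≤ 1 :=
    (div_le_one hlogN).2 (by linarith [sum_primesLE_log_div_le N])
  have hloglog : log (log N) ≤ log (log x) :=
    log_le_log hlogN (log_le_log (by positivity) (floor_le (by positivity)))
  linarith [sum_primesLE_one_div_le N hN]
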